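/- Jackson's q-Pfaff-Saalschütz summation: for complex numbers a, b, c with c ≠ 0, c/(ab) well-defined, and a nonnegative integer N, the terminating balanced series satisfies ∑_{k=0}^{N} (a;q)_k (b;q)_k (q^{-N};q)_k / ((c;q)_k (a b q^{1-N}/c;q)_k (q;q)_k) · q^k = (c/a;q)_N (c/b;q)_N / ((c;q)_N (c/(ab);q)_N), where (x;q)_k = ∏_{j=0}^{k-1}(1 - x q^j) and 0 < |q| < 1 (the identity holds as a rational function identity whenever all denominators are nonzero). -/

import Mathlib

/-!
Induction on `N`. For arbitrary parameters, the terms `t(a, b, ν; c, d)ₖ` of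
`₃φ₂(a, b, ν; c, d; q, q)` satisfy the contiguous relation

  `t(a, b, ν/q; c, d)ₖ₊₁ = t(a/q, b, ν; c, d)ₖ₊₁ + (1-b)(a-ν)/((1-c)(1-d)) · t(a, bq, ν; cq, dq)ₖ`,

which comes down to `(1 - a qᵏ)(q - ν) - (q - a)(1 - ν qᵏ) = (a - ν)(1 - qᵏ⁺¹)`. Take `ν = q⁻ᴺ` and
`d = a b q⁻ᴺ / c`: summed over `k` (the series terminate since `(q⁻ᴺ; q)ₖ = 0` for `k > N`), the
relation writes the balanced sum of level `N + 1` with parameters `(a, b, c)` through the balanced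
sums of level `N` with parameters `(a/q, b, c)` and `(a, bq, cq)`, and the product side satisfies
the same recurrence.
-/

noncomputable def qp (q x : ℂ) (k : ℕ) : ℂ := ∏ j ∈ Finset.range k, (1 - x * q ^ j)

noncomputable def qpi (q x : ℂ) : ℂ := ∏' j : ℕ, (1 - x * q ^ j)

open Finset

section

variable {q x : ℂ}

@[simp] lemma qp_zero (q x : ℂ) : qp q x 0 = 1 := prod_range_zero _

lemma qp_succ (q x : ℂ) (k : ℕ) : qp q x (k + 1) = qp q x k * (1 - x * q ^ k) :=
  prod_range_succ _ _

lemma qp_succ' (q x : ℂ) (k : ℕ) : qp q x (k + 1) = (1 - x) * qp q (x * q) k := by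
  simp only [qp, prod_range_succ', pow_succ, pow_zero, mul_one, mul_assoc, mul_comm q]
  ring

lemma qp_mul_eq (hx : 1 - x ≠ 0) (k : ℕ) :
    qp q (x * q) k = qp q x k * (1 - x * q ^ k) / (1 - x) := by
  rw [eq_div_iff hx, ← qp_succ, qp_succ', mul_comm]

lemma qp_ne_zero_of_le {j k : ℕ} (hjk : j ≤ k) (hk : qp q x k ≠ 0) : qp q x j ≠ 0 := by
  obtain ⟨d, rfl⟩ := Nat.exists_eq_add_of_le hjk
  rw [qp, prod_range_add] at hk
  exact left_ne_zero_of_mul hk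

lemma qp_mul_ne_zero {N : ℕ} (h : qp q x (N + 1) ≠ 0) : qp q (x * q) N ≠ 0 :=
  right_ne_zero_of_mul (qp_succ' q x N ▸ h)

lemma one_sub_ne_zero_of_qp {N : ℕ} (h : qp q x (N + 1) ≠ 0) : 1 - x ≠ 0 :=
  left_ne_zero_of_mul (qp_succ' q x N ▸ h)

lemma one_sub_mul_pow_ne_zero_of_qp {N : ℕ} (h : qp q x (N + 1) ≠ 0) : 1 - x * q ^ N ≠ 0 :=
  right_ne_zero_of_mul (qp_succ q x N ▸ h)

lemma qp_inv_pow_succ_eq_zero (hq : q ≠ 0) (N : ℕ) : qp q (q ^ N)⁻¹ (N + 1) = 0 := by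
  rw [qp_succ, inv_mul_cancel₀ (pow_ne_zero N hq), sub_self, mul_zero]

lemma one_sub_inv_ne_zero (h : 1 - x ≠ 0) : 1 - x⁻¹ ≠ 0 := by
  rwa [sub_ne_zero, ne_comm, inv_ne_one, ne_comm, ← sub_ne_zero]

/-- The `k`-th term of `₃φ₂(a, b, ν; c, d; q, q)`. -/
noncomputable def phi32Term (q a b ν c d : ℂ) (k : ℕ) : ℂ :=
  qp q a k * qp q b k * qp q ν k / (qp q c k * qp q d k * qp q q k) * q ^ k

lemma phi32Term_zero (q a b ν c d : ℂ) : phi32Term q a b ν c d 0 = 1 := by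
  simp [phi32Term]

lemma phi32Term_contiguous {a b ν c d : ℂ} {k : ℕ} (hq : q ≠ 0) (hc : 1 - c ≠ 0)
    (hd : 1 - d ≠ 0) (hk : 1 - q ^ (k + 1) ≠ 0) :
    phi32Term q a b (ν / q) c d (k + 1) = phi32Term q (a / q) b ν c d (k + 1)
      + (1 - b) * (a - ν) / ((1 - c) * (1 - d)) * phi32Term q a (b * q) ν (c * q) (d * q) k := by
  set T := phi32Term q a (b * q) ν (c * q) (d * q) k
  have hT₁ : phi32Term q a b (ν / q) c d (k + 1) = T
      * ((1 - a * q ^ k) * (1 - b) * (1 - ν / q) * q / ((1 - c) * (1 - d) * (1 - q ^ (k + 1)))) := by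
    simp only [T, phi32Term]
    rw [qp_succ q a, qp_succ' q b, qp_succ' q (ν / q), div_mul_cancel₀ ν hq, qp_succ' q c,
      qp_succ' q d, qp_succ q q, ← pow_succ']
    simp only [div_eq_mul_inv, mul_inv]
    ring
  have hT₂ : phi32Term q (a / q) b ν c d (k + 1) = T
      * ((1 - a / q) * (1 - b) * (1 - ν * q ^ k) * q / ((1 - c) * (1 - d) * (1 - q ^ (k + 1)))) := by
    simp only [T, phi32Term]
    rw [qp_succ' q (a / q), div_mul_cancel₀ a hq, qp_succ' q b, qp_succ q ν, qp_succ' q c,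
      qp_succ' q d, qp_succ q q, ← pow_succ']
    simp only [div_eq_mul_inv, mul_inv]
    ring
  rw [hT₁, hT₂]
  field_simp
  ring

lemma sum_phi32Term_contiguous {a b ν c d : ℂ} {N : ℕ} (hq : q ≠ 0) (hc : 1 - c ≠ 0)
    (hd : 1 - d ≠ 0) (hQ : qp q q (N + 1) ≠ 0) (hν : qp q ν (N + 1) = 0) :
    ∑ k ∈ range (N + 2), phi32Term q a b (ν / q) c d k
      = ∑ k ∈ range (N + 1), phi32Term q (a / q) b ν c d k
        + (1 - b) * (a - ν) / ((1 - c) * (1 - d))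
          * ∑ k ∈ range (N + 1), phi32Term q a (b * q) ν (c * q) (d * q) k := by
  have hstep : ∀ k ∈ range (N + 1), phi32Term q a b (ν / q) c d (k + 1)
      = phi32Term q (a / q) b ν c d (k + 1)
        + (1 - b) * (a - ν) / ((1 - c) * (1 - d)) * phi32Term q a (b * q) ν (c * q) (d * q) k :=
    fun k hk ↦ phi32Term_contiguous hq hc hd <| by
      simpa only [pow_succ'] using
        one_sub_mul_pow_ne_zero_of_qp (qp_ne_zero_of_le (mem_range.mp hk) hQ)
  have hlast : phi32Term q (a / q) b ν c d (N + 1) = 0 := by simp [phi32Term, hν]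
  rw [sum_range_succ', sum_congr rfl hstep, sum_add_distrib, ← mul_sum, sum_range_succ _ N,
    hlast, sum_range_succ' (phi32Term q (a / q) b ν c d) N, phi32Term_zero, phi32Term_zero]
  ring

noncomputable def saalschuetzProd (q a b c : ℂ) (N : ℕ) : ℂ :=
  qp q (c / a) N * qp q (c / b) N / (qp q c N * qp q (c / (a * b)) N)

lemma saalschuetz_coeff_identity {a b c n : ℂ} (ha : a ≠ 0) (hb : b ≠ 0) (hc : c ≠ 0)
    (hn : n ≠ 0) (h1c : 1 - c ≠ 0) (h1cn : 1 - c * n ≠ 0) (habn : c * n ≠ a * b) :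
    (1 - c / a) * (1 - c / b * n) / ((1 - c * n) * (1 - c / (a * b) * n))
      = (1 - c / (a * b)) / (1 - c / (a * b) * n)
        + (1 - b) * (a - n⁻¹) / ((1 - c) * (1 - a * b / (c * n))) * ((1 - c) / (1 - c * n)) := by
  have h₁ : a * b - c * n ≠ 0 := sub_ne_zero.mpr habn.symm
  have h₂ : c * n - a * b ≠ 0 := sub_ne_zero.mpr habn
  field_simp
  ring

lemma saalschuetzProd_succ {a b c : ℂ} {N : ℕ} (hq : q ≠ 0) (ha : a ≠ 0) (hb : b ≠ 0)
    (hc : c ≠ 0) (hcN : qp q c (N + 1) ≠ 0) (hX : qp q (c / (a * b)) (N + 1) ≠ 0) :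
    saalschuetzProd q a b c (N + 1) = saalschuetzProd q (a / q) b c N
      + (1 - b) * (a - (q ^ N)⁻¹) / ((1 - c) * (1 - a * b / (c * q ^ N)))
        * saalschuetzProd q a (b * q) (c * q) N := by
  set W := qp q (c / a * q) N * qp q (c / b) N / (qp q c N * qp q (c / (a * b)) N)
  have h1c := one_sub_ne_zero_of_qp hcN
  have hP : saalschuetzProd q a b c (N + 1) = W * ((1 - c / a) * (1 - c / b * q ^ N)
      / ((1 - c * q ^ N) * (1 - c / (a * b) * q ^ N))) := by
    simp only [W, saalschuetzProd]
    rw [qp_succ' q (c / a), qp_succ q (c / b), qp_succ q c, qp_succ q (c / (a * b))]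
    simp only [div_eq_mul_inv, mul_inv]
    ring
  have hP₁ : saalschuetzProd q (a / q) b c N
      = W * ((1 - c / (a * b)) / (1 - c / (a * b) * q ^ N)) := by
    simp only [W, saalschuetzProd]
    rw [show c / (a / q) = c / a * q by field_simp, show c / (a / q * b) = c / (a * b) * q by
      field_simp, qp_mul_eq (one_sub_ne_zero_of_qp hX)]
    simp only [div_eq_mul_inv, mul_inv, inv_inv]
    ring
  have hP₂ : saalschuetzProd q a (b * q) (c * q) N = W * ((1 - c) / (1 - c * q ^ N)) := by
    simp only [W, saalschuetzProd]
    rw [show c * q / a = c / a * q by ring, show c * q / (b * q) = c / b by field_simp,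
      show c * q / (a * (b * q)) = c / (a * b) by field_simp, qp_mul_eq h1c]
    simp only [div_eq_mul_inv, mul_inv, inv_inv]
    ring
  have habN : c * q ^ N ≠ a * b := fun h ↦ one_sub_mul_pow_ne_zero_of_qp hX <| by
    rw [div_mul_eq_mul_div, h, div_self (mul_ne_zero ha hb), sub_self]
  rw [hP, hP₁, hP₂, saalschuetz_coeff_identity ha hb hc (pow_ne_zero N hq) h1c
    (one_sub_mul_pow_ne_zero_of_qp hcN) habN]
  ring

theorem sum_phi32Term_eq_saalschuetzProd (hq : q ≠ 0) (N : ℕ) {a b c : ℂ} (ha : a ≠ 0)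
    (hb : b ≠ 0) (hc : c ≠ 0) (hcN : qp q c N ≠ 0) (hQ : qp q q N ≠ 0)
    (hX : qp q (c / (a * b)) N ≠ 0) :
    ∑ k ∈ range (N + 1), phi32Term q a b (q ^ N)⁻¹ c (a * b * q / (c * q ^ N)) k
      = saalschuetzProd q a b c N := by
  induction N generalizing a b c with
  | zero => simp [phi32Term_zero, saalschuetzProd]
  | succ N ih =>
    have hν : (q ^ (N + 1))⁻¹ = (q ^ N)⁻¹ / q := by rw [pow_succ, mul_inv, div_eq_mul_inv]
    have hd : a * b * q / (c * q ^ (N + 1)) = a * b / (c * q ^ N) := by field_simp; ring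
    have h1d : 1 - a * b / (c * q ^ N) ≠ 0 := by
      have h := one_sub_inv_ne_zero (one_sub_mul_pow_ne_zero_of_qp hX)
      rwa [show (c / (a * b) * q ^ N)⁻¹ = a * b / (c * q ^ N) by field_simp] at h
    have ih₁ := ih (div_ne_zero ha hq) hb hc (qp_ne_zero_of_le N.le_succ hcN)
      (qp_ne_zero_of_le N.le_succ hQ)
      (by simpa only [show c / (a / q * b) = c / (a * b) * q by field_simp] using qp_mul_ne_zero hX)
    have ih₂ := ih ha (mul_ne_zero hb hq) (mul_ne_zero hc hq) (qp_mul_ne_zero hcN)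
      (qp_ne_zero_of_le N.le_succ hQ)
      (by simpa only [show c * q / (a * (b * q)) = c / (a * b) by field_simp] using
        qp_ne_zero_of_le N.le_succ hX)
    rw [show a / q * b * q / (c * q ^ N) = a * b / (c * q ^ N) by field_simp] at ih₁
    rw [show a * (b * q) * q / (c * q * q ^ N) = a * b / (c * q ^ N) * q by field_simp] at ih₂
    rw [hν, hd, sum_phi32Term_contiguous hq (one_sub_ne_zero_of_qp hcN) h1d hQ
      (qp_inv_pow_succ_eq_zero hq N), ih₁, ih₂, saalschuetzProd_succ hq ha hb hc hcN hX]

end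

theorem qPfaffSaalschuetz_general (q a b c : ℂ) (N : ℕ)
    (hq0 : 0 < ‖q‖)
    (ha : a ≠ 0) (hb : b ≠ 0) (hc : c ≠ 0)
    (hden : ∀ k ≤ N, qp q c k ≠ 0 ∧ qp q (a * b * q ^ ((1 : ℤ) - N) / c) k ≠ 0 ∧ qp q q k ≠ 0)
    (hdenN : qp q c N ≠ 0 ∧ qp q (c / (a * b)) N ≠ 0) :
    ∑ k ∈ Finset.range (N + 1),
        qp q a k * qp q b k * qp q (q ^ (-(N : ℤ))) k /
          (qp q c k * qp q (a * b * q ^ ((1 : ℤ) - N) / c) k * qp q q k) * q ^ k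
      = qp q (c / a) N * qp q (c / b) N / (qp q c N * qp q (c / (a * b)) N) := by
  have hq : q ≠ 0 := norm_pos_iff.mp hq0
  have hν : q ^ (-(N : ℤ)) = (q ^ N)⁻¹ := by rw [zpow_neg, zpow_natCast]
  have hd : a * b * q ^ ((1 : ℤ) - N) / c = a * b * q / (c * q ^ N) := by
    rw [zpow_sub₀ hq, zpow_one, zpow_natCast]
    ring
  rw [hν, hd]
  exact sum_phi32Term_eq_saalschuetzProd hq N ha hb hc hdenN.1 (hden N le_rfl).2.2 hdenN.2

/-- Jackson's q-Pfaff-Saalschütz summation. -/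
theorem qPfaffSaalschuetz (q a b c : ℂ) (N : ℕ)
    (hq0 : 0 < ‖q‖) (hq1 : ‖q‖ < 1)
    (ha : a ≠ 0) (hb : b ≠ 0) (hc : c ≠ 0)
    (hden : ∀ k ≤ N, qp q c k ≠ 0 ∧ qp q (a * b * q ^ ((1 : ℤ) - N) / c) k ≠ 0 ∧ qp q q k ≠ 0)
    (hdenN : qp q c N ≠ 0 ∧ qp q (c / (a * b)) N ≠ 0) :
    ∑ k ∈ Finset.range (N + 1),
        qp q a k * qp q b k * qp q (q ^ (-(N : ℤ))) k /
          (qp q c k * qp q (a * b * q ^ ((1 : ℤ) - N) / c) k * qp q q k) * q ^ k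
      = qp q (c / a) N * qp q (c / b) N / (qp q c N * qp q (c / (a * b)) N) :=
  qPfaffSaalschuetz_general q a b c N hq0 ha hb hc hden hdenN
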